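/- For any unit vector ψ of the n-fold tensor power of ℂ² and any unit vector φ of the m-fold tensor power of ℂ²: Prob(OR(ψ, φ)) = Prob(ψ) + Prob(φ) − Prob(ψ) · Prob(φ). -/

import Mathlib

open Complex Finset

noncomputable section

/-- The `n`-fold tensor power of `ℂ²`, identified with `EuclideanSpace ℂ (Fin (2^n))`. -/
abbrev QReg (n : ℕ) := EuclideanSpace ℂ (Fin (2 ^ n))

/-- Flip the last bit of a binary index. -/
def flipIdx {N : ℕ} (j : Fin N) : Fin N :=
  ⟨(j.val ^^^ 1) % N, Nat.mod_lt _ j.pos⟩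

/-- The gate `NOT⁽ⁿ⁾`: flips the last bit of each basis label, i.e. swaps the
coordinates `a_{2k}` and `a_{2k+1}`. -/
def NOTg (n : ℕ) (ψ : QReg n) : QReg n := WithLp.toLp 2 fun j => ψ (flipIdx j)

/-- The gate `√NOT⁽ⁿ⁾`: replaces each coordinate pair `(a_{2k}, a_{2k+1})` by
`(½(1+i)a_{2k} + ½(1−i)a_{2k+1}, ½(1−i)a_{2k} + ½(1+i)a_{2k+1})`. -/
def sqNOTg (n : ℕ) (ψ : QReg n) : QReg n := WithLp.toLp 2 fun j =>
  if j.val % 2 = 0 then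
    (1 + Complex.I) / 2 * ψ j + (1 - Complex.I) / 2 * ψ (flipIdx j)
  else
    (1 - Complex.I) / 2 * ψ (flipIdx j) + (1 + Complex.I) / 2 * ψ j

/-- Action of the Toffoli gate `T⁽ⁿ'ᵐ'¹⁾` on basis indices: if the bits `xₙ`
(weight `2^(m+1)`) and `y_m` (weight `2`) are both `1`, flip the last bit `z`. -/
def toffIdx (n m : ℕ) (j : Fin (2 ^ (n + m + 1))) : Fin (2 ^ (n + m + 1)) :=
  if (j.val / 2 ^ (m + 1)) % 2 = 1 ∧ (j.val / 2) % 2 = 1 then flipIdx j else j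

/-- The Toffoli gate `T⁽ⁿ'ᵐ'¹⁾`. -/
def Tg (n m : ℕ) (ψ : QReg (n + m + 1)) : QReg (n + m + 1) := WithLp.toLp 2 fun j => ψ (toffIdx n m j)

/-- Tensor product of coefficient vectors: `(ψ ⊗ φ)_{2^m·j + k} = ψ_j · φ_k`. -/
def tensor {n m : ℕ} (ψ : QReg n) (φ : QReg m) : QReg (n + m) := WithLp.toLp 2 fun j =>
  ψ ⟨j.val / 2 ^ m, by
        have h : (j : ℕ) < 2 ^ n * 2 ^ m :=
          lt_of_lt_of_le j.isLt (le_of_eq (pow_add 2 n m))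
        exact (Nat.div_lt_iff_lt_mul (Nat.two_pow_pos m)).mpr h⟩ *
  φ ⟨j.val % 2 ^ m, Nat.mod_lt _ (Nat.two_pow_pos m)⟩

/-- The bit `|0⟩ = e₀ ∈ ℂ²`. -/
def ket0 : QReg 1 := WithLp.toLp 2 fun j => if j.val = 0 then 1 else 0

/-- `AND(ψ, φ) := T⁽ⁿ'ᵐ'¹⁾(ψ ⊗ φ ⊗ |0⟩)`. -/
def ANDg (n m : ℕ) (ψ : QReg n) (φ : QReg m) : QReg (n + m + 1) :=
  Tg n m (tensor (tensor ψ φ) ket0)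

/-- `OR(ψ, φ) := NOT(AND(NOT ψ, NOT φ))`. -/
def ORg (n m : ℕ) (ψ : QReg n) (φ : QReg m) : QReg (n + m + 1) :=
  NOTg (n + m + 1) (ANDg n m (NOTg n ψ) (NOTg m φ))

/-- The probability-value of a vector: the sum of `‖a_j‖²` over the odd indices `j`
(those whose basis label ends with the bit `1`). -/
def Prob {n : ℕ} (ψ : QReg n) : ℝ :=
  ∑ j ∈ Finset.univ.filter (fun j : Fin (2 ^ n) => j.val % 2 = 1), ‖ψ j‖ ^ 2


/-!
`NOT` permutes the coordinates, exchanging each even index with the next odd one; hence it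
preserves the norm and turns `Prob χ` into `‖χ‖² - Prob χ`. Writing an odd index of the `AND`
register as `2 (2^m a + b) + 1`, the Toffoli gate puts `ψ a * φ b` there exactly when the
controls `a` and `b` are both odd, and `0` otherwise, so `Prob (AND ψ φ) = Prob ψ * Prob φ`.
The gates permute coordinates and `‖ψ ⊗ φ‖ = ‖ψ‖ ‖φ‖`, so all registers stay unit vectors and
`Prob (OR ψ φ) = 1 - (1 - Prob ψ) (1 - Prob φ)`.
-/

theorem Nat.xor_one_div_two (j : ℕ) : (j ^^^ 1) / 2 = j / 2 := by
  rcases Nat.even_or_odd j with h | h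
  · rw [Nat.xor_one_of_even h]; have := Nat.even_iff.mp h; omega
  · rw [Nat.xor_one_of_odd h]; have := Nat.odd_iff.mp h; omega

theorem Nat.xor_one_lt_of_even {N j : ℕ} (hN : Even N) (hj : j < N) : j ^^^ 1 < N := by
  have := Nat.even_iff.mp hN
  rcases Nat.even_or_odd j with h | h
  · rw [Nat.xor_one_of_even h]; have := Nat.even_iff.mp h; omega
  · rw [Nat.xor_one_of_odd h]; omega

theorem EuclideanSpace.norm_toLp_comp_perm {𝕜 ι : Type*} [RCLike 𝕜] [Fintype ι]
    (e : Equiv.Perm ι) (x : EuclideanSpace 𝕜 ι) :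
    ‖WithLp.toLp 2 (fun j => x (e j))‖ = ‖x‖ := by
  rw [← sq_eq_sq₀ (norm_nonneg _) (norm_nonneg _), EuclideanSpace.norm_sq_eq,
    EuclideanSpace.norm_sq_eq]
  exact Equiv.sum_comp e fun j => ‖x j‖ ^ 2

theorem even_two_pow {k : ℕ} (hk : k ≠ 0) : Even (2 ^ k) := (Nat.even_pow' hk).mpr even_two

section flipIdx

variable {N : ℕ}

theorem flipIdx_val (hN : Even N) (j : Fin N) : (flipIdx j).val = j.val ^^^ 1 :=
  Nat.mod_eq_of_lt (Nat.xor_one_lt_of_even hN j.isLt)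

theorem flipIdx_val_mod_two (hN : Even N) (j : Fin N) :
    (flipIdx j).val % 2 = (j.val + 1) % 2 := by
  rw [flipIdx_val hN, Nat.xor_mod_two_eq]

theorem flipIdx_val_div_two (hN : Even N) (j : Fin N) : (flipIdx j).val / 2 = j.val / 2 := by
  rw [flipIdx_val hN, Nat.xor_one_div_two]

theorem flipIdx_involutive (hN : Even N) : Function.Involutive (flipIdx (N := N)) := fun j =>
  Fin.ext (by rw [flipIdx_val hN, flipIdx_val hN, Nat.xor_xor_cancel_right])

end flipIdx

theorem norm_NOTg {k : ℕ} (hk : k ≠ 0) (χ : QReg k) : ‖NOTg k χ‖ = ‖χ‖ :=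
  EuclideanSpace.norm_toLp_comp_perm ((flipIdx_involutive (even_two_pow hk)).toPerm _) χ

theorem Prob_NOTg {k : ℕ} (hk : k ≠ 0) (χ : QReg k) :
    Prob (NOTg k χ) = ‖χ‖ ^ 2 - Prob χ := by
  have hN := even_two_pow hk
  have heven : Prob (NOTg k χ) = ∑ j with ¬ j.val % 2 = 1, ‖χ j‖ ^ 2 :=
    Finset.sum_equiv ((flipIdx_involutive hN).toPerm _) (fun j => by
      simp only [Finset.mem_filter, Finset.mem_univ, true_and, Function.Involutive.coe_toPerm,
        flipIdx_val_mod_two hN]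
      omega) fun _ _ => rfl
  have hsplit := Finset.sum_filter_add_sum_filter_not Finset.univ
    (fun j : Fin (2 ^ k) => j.val % 2 = 1) fun j => ‖χ j‖ ^ 2
  rw [heven, EuclideanSpace.norm_sq_eq, Prob, ← hsplit]
  ring

theorem toffIdx_involutive (n m : ℕ) : Function.Involutive (toffIdx n m) := by
  have hN : Even (2 ^ (n + m + 1)) := even_two_pow (by omega)
  have hdiv (i : ℕ) : i / 2 ^ (m + 1) = i / 2 / 2 ^ m := by
    rw [Nat.div_div_eq_div_mul, pow_succ']
  intro j
  by_cases hcontrol : (j.val / 2 ^ (m + 1)) % 2 = 1 ∧ (j.val / 2) % 2 = 1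
  · have hflip : toffIdx n m j = flipIdx j := if_pos hcontrol
    have hback : toffIdx n m (flipIdx j) = flipIdx (flipIdx j) :=
      if_pos (by rwa [hdiv, flipIdx_val_div_two hN, ← hdiv])
    rw [hflip, hback, flipIdx_involutive hN]
  · have hfix : toffIdx n m j = j := if_neg hcontrol
    rw [hfix, hfix]

theorem norm_Tg (n m : ℕ) (χ : QReg (n + m + 1)) : ‖Tg n m χ‖ = ‖χ‖ :=
  EuclideanSpace.norm_toLp_comp_perm ((toffIdx_involutive n m).toPerm _) χ

def tensorIdx (n m : ℕ) : Fin (2 ^ n) × Fin (2 ^ m) ≃ Fin (2 ^ (n + m)) :=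
  finProdFinEquiv.trans (finCongr (pow_add 2 n m).symm)

theorem tensorIdx_val (n m : ℕ) (p : Fin (2 ^ n) × Fin (2 ^ m)) :
    (tensorIdx n m p).val = 2 ^ m * p.1.val + p.2.val := by
  simp [tensorIdx, finProdFinEquiv, add_comm]

section tensor

variable {n m : ℕ} (ψ : QReg n) (φ : QReg m)

theorem tensor_apply_of_val (j : Fin (2 ^ (n + m))) (a : Fin (2 ^ n)) (b : Fin (2 ^ m))
    (hj : j.val = 2 ^ m * a.val + b.val) : tensor ψ φ j = ψ a * φ b := by
  have hb := b.isLt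
  have hdiv : j.val / 2 ^ m = a.val := by
    rw [hj, Nat.mul_add_div (Nat.two_pow_pos m), Nat.div_eq_of_lt hb, add_zero]
  have hmod : j.val % 2 ^ m = b.val := by rw [hj, Nat.mul_add_mod, Nat.mod_eq_of_lt hb]
  exact congr_arg₂ (ψ · * φ ·) (Fin.ext hdiv) (Fin.ext hmod)

theorem tensor_apply_tensorIdx (a : Fin (2 ^ n)) (b : Fin (2 ^ m)) :
    tensor ψ φ (tensorIdx n m (a, b)) = ψ a * φ b :=
  tensor_apply_of_val ψ φ _ a b (tensorIdx_val n m (a, b))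

theorem norm_tensor : ‖tensor ψ φ‖ = ‖ψ‖ * ‖φ‖ := by
  rw [← sq_eq_sq₀ (norm_nonneg _) (by positivity), mul_pow, EuclideanSpace.norm_sq_eq,
    EuclideanSpace.norm_sq_eq, EuclideanSpace.norm_sq_eq, Finset.sum_mul_sum,
    ← (tensorIdx n m).sum_comp, Fintype.sum_prod_type]
  simp only [tensor_apply_tensorIdx, norm_mul, mul_pow]

end tensor

theorem ket0_eq_single : ket0 = PiLp.single 2 0 1 := by
  ext j
  simp only [ket0, PiLp.single_apply, Fin.ext_iff, Fin.val_zero]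

theorem norm_ket0 : ‖ket0‖ = 1 := by
  rw [ket0_eq_single, PiLp.norm_single, norm_one]

theorem tensor_ket0_apply_of_even {k : ℕ} (χ : QReg k) (j : Fin (2 ^ (k + 1)))
    (i : Fin (2 ^ k)) (hj : j.val = 2 * i.val) : tensor χ ket0 j = χ i := by
  rw [tensor_apply_of_val χ ket0 j i 0 (by rw [hj, Fin.val_zero, pow_one, add_zero]),
    ket0_eq_single, PiLp.single_apply, if_pos rfl, mul_one]

theorem tensor_ket0_apply_of_odd {k : ℕ} (χ : QReg k) (j : Fin (2 ^ (k + 1)))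
    (hj : j.val % 2 = 1) : tensor χ ket0 j = 0 := by
  rw [tensor_apply_of_val χ ket0 j ⟨j.val / 2, by omega⟩ ⟨1, by norm_num⟩
      (by simp only [pow_one]; omega),
    ket0_eq_single, PiLp.single_apply, if_neg (by simp), mul_zero]

def oddIdx {k : ℕ} (i : Fin (2 ^ k)) : Fin (2 ^ (k + 1)) :=
  ⟨2 * i.val + 1, by rw [pow_succ]; omega⟩

theorem Prob_eq_sum_oddIdx {k : ℕ} (χ : QReg (k + 1)) :
    Prob χ = ∑ i, ‖χ (oddIdx i)‖ ^ 2 := by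
  refine (Finset.sum_nbij oddIdx (fun i _ => ?_) (fun i _ i' _ h => ?_) (fun j hj => ?_)
    (fun _ _ => rfl)).symm
  · simp [oddIdx]
  · simpa [oddIdx, Fin.ext_iff] using h
  · have hodd : j.val % 2 = 1 := by simpa using hj
    have hlt : j.val < 2 ^ k * 2 := by rw [← pow_succ]; exact j.isLt
    exact ⟨⟨j.val / 2, by omega⟩, by simp, Fin.ext (by simp only [oddIdx]; omega)⟩

theorem ANDg_apply_oddIdx {n m : ℕ} (hm : m ≠ 0) (ψ : QReg n) (φ : QReg m) (a : Fin (2 ^ n))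
    (b : Fin (2 ^ m)) :
    ANDg n m ψ φ (oddIdx (tensorIdx n m (a, b))) =
      if a.val % 2 = 1 ∧ b.val % 2 = 1 then ψ a * φ b else 0 := by
  set j := oddIdx (tensorIdx n m (a, b))
  have hN : Even (2 ^ (n + m + 1)) := even_two_pow (by omega)
  have hb := b.isLt
  have hj : j.val = 2 * (2 ^ m * a.val + b.val) + 1 := by
    simp only [j, oddIdx, tensorIdx_val]
  have hhigh : j.val / 2 ^ (m + 1) = a.val := by
    rw [hj, pow_succ', ← Nat.div_div_eq_div_mul]
    have : (2 * (2 ^ m * a.val + b.val) + 1) / 2 = 2 ^ m * a.val + b.val := by omega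
    rw [this, Nat.mul_add_div (Nat.two_pow_pos m), Nat.div_eq_of_lt hb, add_zero]
  have hlow : j.val / 2 % 2 = b.val % 2 := by
    have heven : 2 ^ m * a.val % 2 = 0 :=
      Nat.mod_eq_zero_of_dvd (dvd_mul_of_dvd_left (dvd_pow_self 2 hm) _)
    omega
  change tensor (tensor ψ φ) ket0 (toffIdx n m j) = _
  by_cases hcontrol : a.val % 2 = 1 ∧ b.val % 2 = 1
  · have hflip : toffIdx n m j = flipIdx j := if_pos (by rwa [hhigh, hlow])
    have hflip_val : (flipIdx j).val = 2 * (tensorIdx n m (a, b)).val := by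
      have := flipIdx_val_div_two hN j
      have := flipIdx_val_mod_two hN j
      simp only [tensorIdx_val]
      omega
    rw [if_pos hcontrol, hflip, tensor_ket0_apply_of_even _ _ _ hflip_val, tensor_apply_tensorIdx]
  · have hfix : toffIdx n m j = j := if_neg (by rwa [hhigh, hlow])
    rw [if_neg hcontrol, hfix, tensor_ket0_apply_of_odd _ _ (by omega)]

theorem Prob_ANDg {n m : ℕ} (hm : m ≠ 0) (ψ : QReg n) (φ : QReg m) :
    Prob (ANDg n m ψ φ) = Prob ψ * Prob φ := by
  have hterm (a : Fin (2 ^ n)) (b : Fin (2 ^ m)) :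
      ‖ANDg n m ψ φ (oddIdx (tensorIdx n m (a, b)))‖ ^ 2 =
        if a.val % 2 = 1 then if b.val % 2 = 1 then ‖ψ a‖ ^ 2 * ‖φ b‖ ^ 2 else 0 else 0 := by
    rw [ANDg_apply_oddIdx hm]
    split_ifs <;> simp_all [mul_pow]
  rw [Prob_eq_sum_oddIdx, ← (tensorIdx n m).sum_comp, Fintype.sum_prod_type, Prob, Prob,
    Finset.sum_mul_sum]
  simp only [hterm, Finset.sum_filter, Finset.sum_ite_irrel, Finset.sum_const_zero]

theorem stmt9 (n m : ℕ) (hn : 1 ≤ n) (hm : 1 ≤ m) (ψ : QReg n) (φ : QReg m)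
    (hψ : ‖ψ‖ = 1) (hφ : ‖φ‖ = 1) :
    Prob (ORg n m ψ φ) = Prob ψ + Prob φ - Prob ψ * Prob φ := by
  have hn' : n ≠ 0 := Nat.one_le_iff_ne_zero.mp hn
  have hm' : m ≠ 0 := Nat.one_le_iff_ne_zero.mp hm
  have hnorm : ‖ANDg n m (NOTg n ψ) (NOTg m φ)‖ = 1 := by
    rw [ANDg, norm_Tg, norm_tensor, norm_tensor, norm_ket0, norm_NOTg hn', norm_NOTg hm', hψ, hφ]
    ring
  rw [ORg, Prob_NOTg (Nat.succ_ne_zero _), hnorm, Prob_ANDg hm', Prob_NOTg hn', Prob_NOTg hm', hψ,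
    hφ]
  ring

end
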